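/- arXiv:2605.01038 — 5 statements merged into one kernel-verified Lean document; each statement's English description precedes it below -/
import Mathlib

section
/- Let v_1, ..., v_n be unit vectors in R^d in isotropic position, let B be the n×d matrix with rows v_1,...,v_n, and let T ⊆ [n] satisfy |T| < n/(8d²). Let B_T̄ denote the submatrix of B consisting of rows indexed by the complement of T. Then the stable rank of B_T̄, defined as ‖B_T̄‖_F² / ‖B_T̄‖², is strictly greater than d − 1/4. -/
open scoped RealInnerProductSpace
open scoped Classical

noncomputable def eNorm {ι : Type*} [Fintype ι] (x : ι → ℝ) : ℝ :=
  Real.sqrt (∑ i, (x i) ^ 2)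

/-- The operator (spectral) norm of a real matrix: the supremum of `‖M x‖` over
unit vectors `x` (Euclidean norms). -/
noncomputable def opNorm {ι κ : Type*} [Fintype ι] [Fintype κ] (M : Matrix ι κ ℝ) : ℝ :=
  sSup {c : ℝ | ∃ x : κ → ℝ, eNorm x = 1 ∧ c = eNorm (M.mulVec x)}

/-- The squared Frobenius norm of a real matrix. -/
noncomputable def frobSq {ι κ : Type*} [Fintype ι] [Fintype κ] (M : Matrix ι κ ℝ) : ℝ :=
  ∑ i, ∑ j, (M i j) ^ 2

/-!
Isotropy says that `‖B x‖² = n/d` for every unit vector `x`, so deleting rows gives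
`‖B_T̄‖² ≤ n/d`, while the Frobenius norm of `B_T̄` is exactly `n - |T|` because the rows are
unit vectors. Hence the stable rank is at least `(n - |T|) d / n = d - d|T|/n > d - 1/(8d)`.
-/

open Matrix

section MatrixNorms

variable {ι κ : Type*} [Fintype ι] [Fintype κ]

theorem eNorm_eq_one_iff (x : κ → ℝ) : eNorm x = 1 ↔ ∑ j, x j ^ 2 = 1 :=
  Real.sqrt_eq_one

theorem sum_sq_mulVec_le_frobSq_mul (M : Matrix ι κ ℝ) (x : κ → ℝ) :
    ∑ i, (M *ᵥ x) i ^ 2 ≤ frobSq M * ∑ j, x j ^ 2 := by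
  rw [frobSq, Finset.sum_mul]
  exact Finset.sum_le_sum fun i _ => Finset.sum_mul_sq_le_sq_mul_sq _ (M i) x

theorem eNorm_mulVec_le_opNorm (M : Matrix ι κ ℝ) {x : κ → ℝ} (hx : eNorm x = 1) :
    eNorm (M *ᵥ x) ≤ opNorm M := by
  have hbdd : BddAbove {c : ℝ | ∃ x : κ → ℝ, eNorm x = 1 ∧ c = eNorm (M *ᵥ x)} := by
    refine ⟨Real.sqrt (frobSq M), ?_⟩
    rintro c ⟨y, hy, rfl⟩
    apply Real.sqrt_le_sqrt
    simpa [(eNorm_eq_one_iff y).mp hy] using sum_sq_mulVec_le_frobSq_mul M y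
  exact le_csSup hbdd ⟨x, hx, rfl⟩

theorem opNorm_sq_le {M : Matrix ι κ ℝ} {c : ℝ} (hc : 0 ≤ c)
    (h : ∀ x : κ → ℝ, ∑ j, x j ^ 2 = 1 → ∑ i, (M *ᵥ x) i ^ 2 ≤ c) :
    opNorm M ^ 2 ≤ c := by
  have hle : opNorm M ≤ Real.sqrt c := by
    refine Real.sSup_le ?_ (Real.sqrt_nonneg c)
    rintro _ ⟨x, hx, rfl⟩
    exact Real.sqrt_le_sqrt (h x ((eNorm_eq_one_iff x).mp hx))
  have hnonneg : 0 ≤ opNorm M := Real.sSup_nonneg fun _ ⟨_, _, hc⟩ => hc ▸ Real.sqrt_nonneg _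
  calc opNorm M ^ 2 ≤ Real.sqrt c ^ 2 := pow_le_pow_left₀ hnonneg hle 2
    _ = c := Real.sq_sqrt hc

theorem one_le_opNorm_of_unit_row (M : Matrix ι κ ℝ) {i₀ : ι} (hrow : ∑ j, M i₀ j ^ 2 = 1) :
    1 ≤ opNorm M := by
  have hi₀ : (M *ᵥ M i₀) i₀ = 1 := by
    simpa [Matrix.mulVec, dotProduct, ← sq] using hrow
  have hsum : 1 ≤ ∑ i, (M *ᵥ M i₀) i ^ 2 := by
    simpa [hi₀] using Finset.single_le_sum (fun i _ => sq_nonneg ((M *ᵥ M i₀) i))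
      (Finset.mem_univ i₀)
  calc (1 : ℝ) = Real.sqrt 1 := Real.sqrt_one.symm
    _ ≤ eNorm (M *ᵥ M i₀) := Real.sqrt_le_sqrt hsum
    _ ≤ opNorm M := eNorm_mulVec_le_opNorm M ((eNorm_eq_one_iff _).mpr hrow)

theorem frobSq_eq_card_of_unit_rows {M : Matrix ι κ ℝ} (hrow : ∀ i, ∑ j, M i j ^ 2 = 1) :
    frobSq M = Fintype.card ι := by
  simp [frobSq, hrow]

theorem sum_sq_mulVec_submatrix_le {ι' : Type*} [Fintype ι'] (M : Matrix ι κ ℝ) {r : ι' → ι}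
    (hr : Function.Injective r) (x : κ → ℝ) :
    ∑ i, (M.submatrix r id *ᵥ x) i ^ 2 ≤ ∑ i, (M *ᵥ x) i ^ 2 := by
  have hsub := Finset.sum_map Finset.univ ⟨r, hr⟩ fun i => (M *ᵥ x) i ^ 2
  calc ∑ i, (M.submatrix r id *ᵥ x) i ^ 2 = ∑ i ∈ Finset.univ.map ⟨r, hr⟩, (M *ᵥ x) i ^ 2 :=
        hsub.symm
    _ ≤ ∑ i, (M *ᵥ x) i ^ 2 :=
        Finset.sum_le_sum_of_subset_of_nonneg (Finset.subset_univ _) fun i _ _ => sq_nonneg _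

end MatrixNorms

section Isotropic

variable {ι : Type*} [Fintype ι] {d : ℕ}

theorem sum_sq_mulVec_eq_of_isotropic {v : ι → EuclideanSpace ℝ (Fin d)} {c : ℝ}
    (hiso : ∀ u : EuclideanSpace ℝ (Fin d), ‖u‖ = 1 → ∑ i, ⟪u, v i⟫ ^ 2 = c)
    {B : Matrix ι (Fin d) ℝ} (hB : ∀ i j, B i j = v i j) {x : Fin d → ℝ}
    (hx : ∑ j, x j ^ 2 = 1) :
    ∑ i, (B *ᵥ x) i ^ 2 = c := by
  have hunit : ‖(WithLp.toLp 2 x : EuclideanSpace ℝ (Fin d))‖ = 1 := by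
    rw [← pow_left_inj₀ (norm_nonneg _) zero_le_one two_ne_zero, one_pow,
      EuclideanSpace.real_norm_sq_eq]
    exact hx
  rw [← hiso _ hunit]
  congr 1 with i
  simp [Matrix.mulVec, dotProduct, PiLp.inner_apply, hB, mul_comm]

theorem sum_sq_eq_one_of_norm_eq_one {v : EuclideanSpace ℝ (Fin d)} (hv : ‖v‖ = 1) :
    ∑ j, v j ^ 2 = 1 := by
  rw [← EuclideanSpace.real_norm_sq_eq, hv, one_pow]

end Isotropic

section Arithmetic

variable {d n t : ℕ}

theorem pos_and_lt_of_lt_div_eight_mul_sq (h : (t : ℝ) < n / (8 * d ^ 2)) : 0 < d ∧ t < n := by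
  have hpos : (0 : ℝ) < n / (8 * d ^ 2) := (Nat.cast_nonneg _).trans_lt h
  have hd : 0 < d := Nat.pos_of_ne_zero fun hd => by simp [hd] at hpos
  have hd' : (1 : ℝ) ≤ d := by exact_mod_cast hd
  have hlt : (t : ℝ) * (8 * d ^ 2) < n := (lt_div_iff₀ (by positivity)).mp h
  refine ⟨hd, ?_⟩
  exact_mod_cast (le_mul_of_one_le_right (Nat.cast_nonneg _) (by nlinarith)).trans_lt hlt

theorem sub_one_div_four_lt_of_lt_div_eight_mul_sq (h : (t : ℝ) < n / (8 * d ^ 2)) :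
    (d : ℝ) - 1 / 4 < (n - t) / (n / d) := by
  obtain ⟨hd, htn⟩ := pos_and_lt_of_lt_div_eight_mul_sq h
  have hd' : (1 : ℝ) ≤ d := by exact_mod_cast hd
  have hn : (0 : ℝ) < n := by exact_mod_cast (Nat.zero_le t).trans_lt htn
  have hlt : (t : ℝ) * (8 * d ^ 2) < n := (lt_div_iff₀ (by positivity)).mp h
  rw [div_div_eq_mul_div, lt_div_iff₀ hn]
  -- `4 t d ≤ 8 t d² < n`
  nlinarith [mul_nonneg (mul_nonneg (Nat.cast_nonneg t) (by linarith : (0 : ℝ) ≤ d))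
    (by linarith : (0 : ℝ) ≤ 2 * d - 1)]

end Arithmetic

theorem stmt3_general (d n : ℕ)
    (v : Fin n → EuclideanSpace ℝ (Fin d))
    (hunit : ∀ i, ‖v i‖ = 1)
    (hiso : ∀ u : EuclideanSpace ℝ (Fin d), ‖u‖ = 1 →
      (1 / n : ℝ) * ∑ i, ⟪u, v i⟫ ^ 2 = 1 / d)
    (B : Matrix (Fin n) (Fin d) ℝ) (hB : ∀ i j, B i j = v i j)
    (T : Finset (Fin n)) (hT : (T.card : ℝ) < n / (8 * d ^ 2)) :
    (d : ℝ) - 1 / 4 <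
      frobSq (Matrix.of fun (i : {i : Fin n // i ∉ T}) (j : Fin d) => B i.1 j) /
        (opNorm (Matrix.of fun (i : {i : Fin n // i ∉ T}) (j : Fin d) => B i.1 j)) ^ 2 := by
  set C : Matrix {i : Fin n // i ∉ T} (Fin d) ℝ := B.submatrix Subtype.val id
  change (d : ℝ) - 1 / 4 < frobSq C / opNorm C ^ 2
  have hcard : T.card < n := (pos_and_lt_of_lt_div_eight_mul_sq hT).2
  have hrow (i : Fin n) : ∑ j, B i j ^ 2 = 1 := by
    simpa only [hB] using sum_sq_eq_one_of_norm_eq_one (hunit i)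
  obtain ⟨i₀, -, hi₀⟩ := Finset.exists_mem_notMem_of_card_lt_card (s := T) (t := Finset.univ)
    (by simpa using hcard)
  -- a surviving unit row keeps `opNorm C` away from 0, where the quotient would be junk
  have hop_one : 1 ≤ opNorm C := one_le_opNorm_of_unit_row (i₀ := ⟨i₀, hi₀⟩) _ (hrow i₀)
  have hop : opNorm C ^ 2 ≤ n / d := by
    refine opNorm_sq_le (by positivity) fun x hx => ?_
    refine (sum_sq_mulVec_submatrix_le B Subtype.val_injective x).trans_eq ?_
    refine sum_sq_mulVec_eq_of_isotropic (fun u hu => ?_) hB hx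
    have hn : (n : ℝ) ≠ 0 := Nat.cast_ne_zero.mpr hcard.ne_bot
    rw [← mul_right_inj' (one_div_ne_zero hn), hiso u hu]
    field_simp
  have hfrob : frobSq C = n - T.card := by
    rw [frobSq_eq_card_of_unit_rows (M := C) fun i => hrow i.1, Fintype.card_subtype_compl,
      Fintype.card_fin, Fintype.card_coe, Nat.cast_sub hcard.le]
  calc (d : ℝ) - 1 / 4 < (n - T.card) / (n / d) := sub_one_div_four_lt_of_lt_div_eight_mul_sq hT
    _ ≤ frobSq C / opNorm C ^ 2 := by
        rw [hfrob]
        exact div_le_div_of_nonneg_left (sub_nonneg.mpr (mod_cast hcard.le))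
          (pow_pos (one_pos.trans_le hop_one) 2) hop

theorem stmt3 (d n : ℕ) (hd : 0 < d) (hn : 0 < n)
    (v : Fin n → EuclideanSpace ℝ (Fin d))
    (hunit : ∀ i, ‖v i‖ = 1)
    (hiso : ∀ u : EuclideanSpace ℝ (Fin d), ‖u‖ = 1 →
      (1 / n : ℝ) * ∑ i, ⟪u, v i⟫ ^ 2 = 1 / d)
    (B : Matrix (Fin n) (Fin d) ℝ) (hB : ∀ i j, B i j = v i j)
    (T : Finset (Fin n)) (hT : (T.card : ℝ) < n / (8 * d ^ 2)) :
    (d : ℝ) - 1 / 4 <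
      frobSq (Matrix.of fun (i : {i : Fin n // i ∉ T}) (j : Fin d) => B i.1 j) /
        (opNorm (Matrix.of fun (i : {i : Fin n // i ∉ T}) (j : Fin d) => B i.1 j)) ^ 2 :=
  stmt3_general d n v hunit hiso B hB T hT
end

section
/- For every n×n sign matrix A with entries in {±1}, there exist points v_1, ..., v_n on the unit circle S¹ ⊆ R² such that for every row i and every probability distribution μ over columns [n], there exists a vector u ∈ R² with Pr_{j∼μ}[sign⟨u, v_j⟩ ≠ A_{i,j}] ≤ 1/2 − 1/(2n). In other words, the (1/2 − 1/(2n))-approximate sign-rank of every n×n sign matrix is at most 2. -/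
/-!
Put `v j` on the unit circle in the direction of `(1, j)`. For `u = (a, b)` the sign of `⟪u, v j⟫`
is the sign of the affine function `a + b j` of the column index, so half-planes through the origin
realise every threshold pattern `j ↦ sign (±(j - j₀) + t)`. Given a row and a distribution `μ`,
pick a column `j₀` of weight at least `1/n` and `t ∈ {0, 1/2}` with `sign t = A i j₀`. The two
classifiers `s = ±1` are both correct at `j₀` and disagree with each other at every other column,
so their error sets are disjoint subsets of `[n] \ {j₀}`, and one of them weighs at most
`(1 - μ j₀) / 2 ≤ 1/2 - 1/(2n)`.
-/

open scoped RealInnerProductSpace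
open scoped Classical

noncomputable def Rsign (x : ℝ) : ℝ := if 0 < x then 1 else -1

lemma Rsign_of_pos {x : ℝ} (h : 0 < x) : Rsign x = 1 := if_pos h

lemma Rsign_of_nonpos {x : ℝ} (h : x ≤ 0) : Rsign x = -1 := if_neg h.not_gt

lemma Rsign_mul_of_pos {c : ℝ} (hc : 0 < c) (x : ℝ) : Rsign (c * x) = Rsign x := by
  simp only [Rsign, mul_pos_iff_of_pos_left hc]

lemma Rsign_add_ne_Rsign_neg_add {x t : ℝ} (ht : 0 ≤ t) (hx : t < |x|) :
    Rsign (x + t) ≠ Rsign (-x + t) := by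
  rcases lt_abs.mp hx with hx | hx
  · rw [Rsign_of_pos (by linarith), Rsign_of_nonpos (by linarith)]; norm_num
  · rw [Rsign_of_nonpos (by linarith), Rsign_of_pos (by linarith)]; norm_num

lemma Rsign_eq_Rsign_of_ne_of_ne {a x y : ℝ} (ha : a = 1 ∨ a = -1)
    (hx : Rsign x ≠ a) (hy : Rsign y ≠ a) : Rsign x = Rsign y := by
  unfold Rsign at *
  split_ifs at * <;> rcases ha with rfl | rfl <;> norm_num at *

lemma sum_filter_add_sum_filter_le {ι : Type*} [Fintype ι] {μ : ι → ℝ} (hμ : ∀ j, 0 ≤ μ j)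
    {p q : ι → Prop} [DecidablePred p] [DecidablePred q] {j₀ : ι} (hp : ¬ p j₀) (hq : ¬ q j₀)
    (hpq : ∀ j, ¬ (p j ∧ q j)) :
    ∑ j ∈ Finset.univ.filter p, μ j + ∑ j ∈ Finset.univ.filter q, μ j ≤ ∑ j, μ j - μ j₀ := by
  have hdisj : Disjoint (Finset.univ.filter p) (Finset.univ.filter q) :=
    Finset.disjoint_filter.mpr fun j _ hpj hqj => hpq j ⟨hpj, hqj⟩
  rw [← Finset.sum_union hdisj, ← Finset.filter_or,
    ← Finset.sum_erase_eq_sub (Finset.mem_univ j₀)]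
  refine Finset.sum_le_sum_of_subset_of_nonneg (fun j hj => ?_) fun j _ _ => hμ j
  obtain ⟨-, hj⟩ := Finset.mem_filter.mp hj
  exact Finset.mem_erase.mpr ⟨by rintro rfl; tauto, Finset.mem_univ j⟩

lemma exists_threshold_error_le {ι : Type*} [Fintype ι] {μ : ι → ℝ} (hμ : ∀ j, 0 ≤ μ j)
    {a : ι → ℝ} (ha : ∀ j, a j = 1 ∨ a j = -1) {x : ι → ℝ} {t : ℝ} {j₀ : ι} (ht : 0 ≤ t)
    (hta : Rsign t = a j₀) (hx₀ : x j₀ = 0) (hx : ∀ j ≠ j₀, t < |x j|) :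
    ∃ s : ℝ, ∑ j ∈ Finset.univ.filter (fun j => Rsign (s * x j + t) ≠ a j), μ j
      ≤ (∑ j, μ j - μ j₀) / 2 := by
  set err : ℝ → ι → Prop := fun s j => Rsign (s * x j + t) ≠ a j
  have hcorrect : ∀ s, ¬ err s j₀ := by simp [err, hx₀, hta]
  have hdisj : ∀ j, ¬ (err 1 j ∧ err (-1) j) := by
    rintro j ⟨hp, hq⟩
    obtain rfl | hj := eq_or_ne j j₀
    · exact hcorrect 1 hp
    · refine Rsign_add_ne_Rsign_neg_add ht (hx j hj) ?_
      simpa using Rsign_eq_Rsign_of_ne_of_ne (ha j) hp hq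
  have hle := sum_filter_add_sum_filter_le hμ (hcorrect 1) (hcorrect (-1)) hdisj
  by_contra! h
  linarith [h 1, h (-1)]

lemma exists_inv_card_le {ι : Type*} [Fintype ι] [Nonempty ι] {μ : ι → ℝ}
    (hsum : ∑ j, μ j = 1) : ∃ j, (Fintype.card ι : ℝ)⁻¹ ≤ μ j := by
  have hconst : ∑ _j : ι, (Fintype.card ι : ℝ)⁻¹ = 1 := by
    simp [Finset.card_univ]
  obtain ⟨j, -, hj⟩ := Finset.exists_le_of_sum_le Finset.univ_nonempty (hconst.trans hsum.symm).le
  exact ⟨j, hj⟩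

noncomputable def circlePoint (x : ℝ) : EuclideanSpace ℝ (Fin 2) := ‖!₂[1, x]‖⁻¹ • !₂[1, x]

lemma vec2_one_ne_zero (x : ℝ) : !₂[1, x] ≠ 0 := by
  intro h
  simpa using congrArg (· 0) h

lemma norm_circlePoint (x : ℝ) : ‖circlePoint x‖ = 1 :=
  norm_smul_inv_norm (vec2_one_ne_zero x)

lemma Rsign_inner_circlePoint (a b x : ℝ) :
    Rsign ⟪!₂[a, b], circlePoint x⟫ = Rsign (a + b * x) := by
  have hinner : ⟪!₂[a, b], !₂[1, x]⟫ = a + b * x := by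
    simp [PiLp.inner_apply, Fin.sum_univ_two]
    ring
  rw [circlePoint, inner_smul_right, hinner,
    Rsign_mul_of_pos (inv_pos.mpr (norm_pos_iff.mpr (vec2_one_ne_zero x)))]

lemma one_le_abs_natCast_sub_natCast {j k : ℕ} (h : j ≠ k) : 1 ≤ |(j : ℝ) - k| := by
  have hz : ((j : ℤ) - k) ≠ 0 := sub_ne_zero.mpr (by exact_mod_cast h)
  exact_mod_cast Int.one_le_abs hz

theorem stmt6 (n : ℕ) (A : Matrix (Fin n) (Fin n) ℝ)
    (hA : ∀ i j, A i j = 1 ∨ A i j = -1) :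
    ∃ v : Fin n → EuclideanSpace ℝ (Fin 2),
      (∀ j, ‖v j‖ = 1) ∧
      ∀ i : Fin n, ∀ μ : Fin n → ℝ, (∀ j, 0 ≤ μ j) → (∑ j, μ j = 1) →
        ∃ u : EuclideanSpace ℝ (Fin 2),
          ∑ j ∈ Finset.univ.filter (fun j => Rsign ⟪u, v j⟫ ≠ A i j), μ j
            ≤ 1 / 2 - 1 / (2 * n) := by
  refine ⟨fun j => circlePoint j, fun j => norm_circlePoint j, fun i μ hμ hsum => ?_⟩
  have : Nonempty (Fin n) := ⟨i⟩
  obtain ⟨j₀, hj₀⟩ := exists_inv_card_le hsum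
  rw [Fintype.card_fin] at hj₀
  set t : ℝ := (1 + A i j₀) / 4
  obtain ⟨ht₀, ht₁, hta⟩ : 0 ≤ t ∧ t < 1 ∧ Rsign t = A i j₀ := by
    rcases hA i j₀ with h | h <;> norm_num [t, h, Rsign]
  obtain ⟨s, hs⟩ := exists_threshold_error_le (x := fun j : Fin n => (j : ℝ) - j₀) hμ (hA i)
    ht₀ hta (sub_self _) fun j hj =>
      ht₁.trans_le (one_le_abs_natCast_sub_natCast (Fin.val_ne_of_ne hj))
  refine ⟨!₂[t - s * j₀, s], ?_⟩
  have hsign : ∀ j : Fin n,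
      Rsign ⟪!₂[t - s * j₀, s], circlePoint j⟫ = Rsign (s * ((j : ℝ) - j₀) + t) :=
    fun j => by rw [Rsign_inner_circlePoint]; ring_nf
  simp only [hsign]
  calc _ ≤ (1 - μ j₀) / 2 := hsum ▸ hs
    _ ≤ 1 / 2 - 1 / (2 * n) := by
      have : 1 / (2 * (n : ℝ)) = (n : ℝ)⁻¹ / 2 := by ring
      linarith
end

section
/- Let A ∈ {±1}^{2^n × n} be the sign matrix whose rows enumerate all 2^n sign vectors in {±1}^n, and suppose there exist vectors v_1,...,v_n ∈ R^d such that for every row i there is u_i ∈ R^d with |{j ∈ [n] : sign⟨u_i, v_j⟩ ≠ A_{i,j}}| ≤ εn, where ε < 1/2. Then C(n,≤d) · C(n,≤⌊εn⌋) ≥ 2^n, where C(n,≤k) := Σ_{j=0}^{k} C(n,j). -/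
/-!
Each row `s` is the symmetric difference of a half-space pattern `{j | 0 < ⟪u, v j⟫}` and an error
set of at most `⌊εn⌋` positions. The half-space patterns have VC dimension at most `d`: on a
shattered set, a linear relation with a positive coefficient is contradicted by the pattern that
selects exactly the positive coefficients, so shattered sets index linearly independent vectors.
Sauer–Shelah then bounds the number of patterns by `C(n, ≤ d)`, and as all `2^n` sets occur as
rows, `2^n ≤ C(n, ≤ d) · C(n, ≤ ⌊εn⌋)`.
-/

open scoped RealInnerProductSpace
open scoped Classical

open Finset Module
open scoped symmDiff

namespace Finset

lemma card_filter_card_le_le_sum_choose {α : Type*} [Fintype α] (k : ℕ) :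
    #{E : Finset α | #E ≤ k} ≤ ∑ j ∈ Iic k, (Fintype.card α).choose j := by
  simp_rw [← card_univ, ← card_powersetCard]
  refine (card_le_card fun E hE ↦ mem_biUnion.2 ⟨#E, ?_⟩).trans card_biUnion_le
  exact ⟨mem_Iic.2 (mem_filter.1 hE).2, mem_powersetCard_univ.2 rfl⟩

lemma two_pow_card_le_card_mul_card_of_forall_eq_symmDiff {α : Type*} [Fintype α]
    [DecidableEq α] {𝒜 ℬ : Finset (Finset α)} (h : ∀ s : Finset α, ∃ P ∈ 𝒜, ∃ E ∈ ℬ, s = P ∆ E) :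
    2 ^ Fintype.card α ≤ #𝒜 * #ℬ := by
  rw [← Fintype.card_finset, ← card_univ, ← card_product]
  refine card_le_card_of_surjOn (fun p ↦ p.1 ∆ p.2) fun s _ ↦ ?_
  obtain ⟨P, hP, E, hE, rfl⟩ := h s
  exact ⟨(P, E), mem_product.2 ⟨hP, hE⟩, rfl⟩

end Finset

section HalfspacePatterns

variable {ι E : Type*} [Fintype ι] [NormedAddCommGroup E] [InnerProductSpace ℝ E]

noncomputable def halfspacePatterns (v : ι → E) : Finset (Finset ι) :=
  {P | ∃ u : E, ∀ j, j ∈ P ↔ 0 < ⟪u, v j⟫}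

lemma filter_inner_pos_mem_halfspacePatterns (v : ι → E) (u : E) :
    ({j | 0 < ⟪u, v j⟫} : Finset ι) ∈ halfspacePatterns v := by
  simpa [halfspacePatterns] using ⟨u, fun _ ↦ Iff.rfl⟩

lemma nonpos_of_sum_smul_eq_zero_of_shatters {v : ι → E} {s : Finset ι}
    (hs : (halfspacePatterns v).Shatters s) {c : ι → ℝ} (hc : ∑ j ∈ s, c j • v j = 0) :
    ∀ j ∈ s, c j ≤ 0 := by
  obtain ⟨P, hP, hsP⟩ := hs (filter_subset (fun j ↦ 0 < c j) s)
  obtain ⟨u, hu⟩ := by simpa [halfspacePatterns] using hP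
  have hsign : ∀ j ∈ s, (0 < c j ↔ 0 < ⟪u, v j⟫) := fun j hj ↦ by
    rw [← hu, ← mem_inter.trans (and_iff_right hj), hsP, mem_filter, and_iff_right hj]
  have hterm : ∀ j ∈ s, 0 ≤ c j * ⟪u, v j⟫ := fun j hj ↦ by
    by_cases hcj : 0 < c j
    · exact (mul_pos hcj ((hsign j hj).1 hcj)).le
    · exact mul_nonneg_of_nonpos_of_nonpos (not_lt.1 hcj)
        (not_lt.1 (mt (hsign j hj).2 hcj))
  have hsum : ∑ j ∈ s, c j * ⟪u, v j⟫ = 0 := by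
    simpa [inner_sum, real_inner_smul_right] using congrArg (⟪u, ·⟫) hc
  intro j hj
  by_contra! hcj
  exact (mul_pos hcj ((hsign j hj).1 hcj)).ne'
    ((sum_eq_zero_iff_of_nonneg hterm).1 hsum j hj)

lemma linearIndepOn_of_shatters {v : ι → E} {s : Finset ι}
    (hs : (halfspacePatterns v).Shatters s) : LinearIndepOn ℝ v s := by
  refine linearIndepOn_finset_iff.2 fun c hc j hj ↦ le_antisymm
    (nonpos_of_sum_smul_eq_zero_of_shatters hs hc j hj) ?_
  have hneg : ∑ j ∈ s, (-c) j • v j = 0 := by simp [neg_smul, sum_neg_distrib, hc]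
  simpa using nonpos_of_sum_smul_eq_zero_of_shatters hs hneg j hj

variable [FiniteDimensional ℝ E]

lemma vcDim_halfspacePatterns_le (v : ι → E) : (halfspacePatterns v).vcDim ≤ finrank ℝ E :=
  Finset.sup_le fun s hs ↦ by
    simpa using (linearIndepOn_of_shatters (mem_shatterer.1 hs)).fintype_card_le_finrank

lemma card_halfspacePatterns_le (v : ι → E) :
    #(halfspacePatterns v) ≤ ∑ j ∈ Iic (finrank ℝ E), (Fintype.card ι).choose j :=
  (card_le_card_shatterer _).trans <| card_shatterer_le_sum_vcDim.trans <|
    sum_le_sum_of_subset (Iic_subset_Iic.2 (vcDim_halfspacePatterns_le v))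

end HalfspacePatterns

lemma filter_Rsign_ne_eq_symmDiff {ι : Type*} [Fintype ι] [DecidableEq ι] (x a : ι → ℝ)
    {s : Finset ι} (ha : ∀ j, a j = if j ∈ s then 1 else -1) :
    ({j | Rsign (x j) ≠ a j} : Finset ι) = ({j | 0 < x j} : Finset ι) ∆ s := by
  ext j
  simp only [mem_symmDiff, mem_filter, mem_univ, true_and, ha, Rsign]
  by_cases hx : 0 < x j <;> by_cases hs : j ∈ s <;> norm_num [hx, hs]

theorem stmt9_general (n d : ℕ) (ε : ℝ)
    (A : Matrix (Fin (2 ^ n)) (Fin n) ℝ)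
    (hA : ∀ g : Fin n → ℝ, (∀ j, g j = 1 ∨ g j = -1) → ∃ i, ∀ j, A i j = g j)
    (v : Fin n → EuclideanSpace ℝ (Fin d))
    (hrep : ∀ i, ∃ u : EuclideanSpace ℝ (Fin d),
      ((Finset.univ.filter fun j => Rsign ⟪u, v j⟫ ≠ A i j).card : ℝ) ≤ ε * n) :
    2 ^ n ≤ (∑ j ∈ Finset.range (d + 1), n.choose j) *
      (∑ j ∈ Finset.range (⌊ε * (n : ℝ)⌋₊ + 1), n.choose j) := by
  set k := ⌊ε * (n : ℝ)⌋₊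
  have hcover : ∀ s : Finset (Fin n), ∃ P ∈ halfspacePatterns v,
      ∃ E ∈ ({E | #E ≤ k} : Finset _), s = P ∆ E := by
    intro s
    obtain ⟨i, hi⟩ : ∃ i, ∀ j, A i j = if j ∈ s then 1 else -1 :=
      hA _ fun j ↦ by by_cases j ∈ s <;> simp [*]
    obtain ⟨u, hu⟩ := hrep i
    refine ⟨_, filter_inner_pos_mem_halfspacePatterns v u,
      ({j | Rsign ⟪u, v j⟫ ≠ A i j} : Finset _), mem_filter.2 ⟨mem_univ _, Nat.le_floor hu⟩, ?_⟩
    rw [filter_Rsign_ne_eq_symmDiff _ _ hi, symmDiff_symmDiff_cancel_left]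
  calc 2 ^ n = 2 ^ Fintype.card (Fin n) := by rw [Fintype.card_fin]
    _ ≤ #(halfspacePatterns v) * #{E : Finset (Fin n) | #E ≤ k} :=
      two_pow_card_le_card_mul_card_of_forall_eq_symmDiff hcover
    _ ≤ _ := by
      simp only [Nat.range_succ_eq_Iic]
      simpa [finrank_euclideanSpace] using Nat.mul_le_mul (card_halfspacePatterns_le v)
        (card_filter_card_le_le_sum_choose (α := Fin n) k)

theorem stmt9 (n d : ℕ) (ε : ℝ) (hε : ε < 1 / 2)
    (A : Matrix (Fin (2 ^ n)) (Fin n) ℝ)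
    (hA : ∀ g : Fin n → ℝ, (∀ j, g j = 1 ∨ g j = -1) → ∃ i, ∀ j, A i j = g j)
    (hA' : ∀ i j, A i j = 1 ∨ A i j = -1)
    (v : Fin n → EuclideanSpace ℝ (Fin d))
    (hrep : ∀ i, ∃ u : EuclideanSpace ℝ (Fin d),
      ((Finset.univ.filter fun j => Rsign ⟪u, v j⟫ ≠ A i j).card : ℝ) ≤ ε * n) :
    2 ^ n ≤ (∑ j ∈ Finset.range (d + 1), n.choose j) *
      (∑ j ∈ Finset.range (⌊ε * (n : ℝ)⌋₊ + 1), n.choose j) :=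
  stmt9_general n d ε A hA v hrep
end

section
/- Fix ε ∈ (0, 1/2) and let A ∈ {±1}^{m×n}. Suppose there exist vectors v_1,...,v_n ∈ R^d and finitely supported distributions η_1,...,η_m over R^d with Pr_{u∼η_i}[sign⟨u, v_j⟩ ≠ A_{i,j}] ≤ ε for all i, j. Then for any odd integer k with n·exp(−2k(1/2−ε)²) < 1, for every row i there exist vectors u_{i,1},...,u_{i,k} ∈ R^d such that A_{i,j} = Majority(sign⟨u_{i,1}, v_j⟩, ..., sign⟨u_{i,k}, v_j⟩) for all j ∈ [n]. -/
/-!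
Sample the `k` vectors of row `i` independently from `η_i`. For a fixed column, each sample
disagrees with `A i j` independently with probability `q ≤ ε`, so by the Chernoff bound with
parameter `λ = (1 - ε) / ε` the probability that at least half of them disagree is at most
`(2 √(ε (1 - ε)))^k ≤ exp (-2 k (1/2 - ε)^2)`. The union bound over the `n` columns leaves a
positive probability that every column is decided correctly by the majority vote, so some
sample does this.
-/

open scoped RealInnerProductSpace
open scoped Classical

open Finset Fintype Real

section Chernoff

variable {α : Type*} {S : Finset α} {p : α → ℝ} {B : α → Prop} [DecidablePred B]

lemma sum_piFinset_prod_mul_pow_card_filter [DecidableEq α] (k : ℕ) (t : ℝ) :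
    ∑ u ∈ piFinset (fun _ : Fin k => S), (∏ l, p (u l)) * t ^ #{l | B (u l)} =
      (∑ w ∈ S, p w * if B w then t else 1) ^ k := by
  rw [sum_pow']
  refine sum_congr rfl fun u _ => ?_
  rw [prod_mul_distrib, prod_ite, prod_const, prod_const_one, mul_one]

lemma sum_mul_ite_eq_one_add (hp1 : ∑ w ∈ S, p w = 1) (t : ℝ) :
    ∑ w ∈ S, p w * (if B w then t else 1) = 1 + (t - 1) * ∑ w ∈ S with B w, p w := by
  have hw : ∀ w, p w * (if B w then t else 1) = p w + if B w then (t - 1) * p w else 0 := by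
    intro w; split_ifs <;> ring
  simp only [hw, sum_add_distrib, hp1, ← sum_filter, mul_sum]

lemma pow_mul_sum_filter_le_sum_mul_sq_pow {ι : Type*} {T : Finset ι} {μ : ι → ℝ}
    (hμ : ∀ u ∈ T, 0 ≤ μ u) (f : ι → ℕ) {σ : ℝ} (hσ : 1 ≤ σ) (k : ℕ) :
    σ ^ k * ∑ u ∈ T with k ≤ 2 * f u, μ u ≤ ∑ u ∈ T, μ u * (σ ^ 2) ^ f u := by
  rw [mul_sum]
  calc ∑ u ∈ T with k ≤ 2 * f u, σ ^ k * μ u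
      ≤ ∑ u ∈ T with k ≤ 2 * f u, μ u * (σ ^ 2) ^ f u := by
        refine sum_le_sum fun u hu => ?_
        rw [mem_filter] at hu
        rw [mul_comm, ← pow_mul]
        exact mul_le_mul_of_nonneg_left (pow_le_pow_right₀ hσ hu.2) (hμ u hu.1)
    _ ≤ ∑ u ∈ T, μ u * (σ ^ 2) ^ f u :=
        sum_le_sum_of_subset_of_nonneg (filter_subset _ _) fun u hu _ =>
          mul_nonneg (hμ u hu) (by positivity)

lemma two_mul_sqrt_mul_one_sub_le_exp (ε : ℝ) :
    2 * √(ε * (1 - ε)) ≤ exp (-2 * (1 / 2 - ε) ^ 2) := by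
  have hexp : exp (-2 * (1 / 2 - ε) ^ 2) ^ 2 = exp (-4 * (1 / 2 - ε) ^ 2) := by
    rw [← exp_nat_mul]; ring_nf
  -- `4 ε (1 - ε) = 1 - 4 (1/2 - ε)^2 ≤ exp (-4 (1/2 - ε)^2)`
  have := add_one_le_exp (-4 * (1 / 2 - ε) ^ 2)
  have hsqrt : √(ε * (1 - ε)) ≤ exp (-2 * (1 / 2 - ε) ^ 2) / 2 :=
    sqrt_le_iff.mpr ⟨by positivity, by rw [div_pow, hexp]; nlinarith⟩
  linarith

theorem sum_piFinset_prod_filter_le_sqrt_pow [DecidableEq α] (hp0 : ∀ w ∈ S, 0 ≤ p w)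
    (hp1 : ∑ w ∈ S, p w = 1) {ε : ℝ} (hε0 : 0 < ε) (hε : ε ≤ 1 / 2)
    (hB : ∑ w ∈ S with B w, p w ≤ ε) (k : ℕ) :
    ∑ u ∈ piFinset (fun _ : Fin k => S) with k ≤ 2 * #{l | B (u l)}, ∏ l, p (u l)
      ≤ (2 * √(ε * (1 - ε))) ^ k := by
  -- Markov's inequality for `σ ^ (2 * #bad)`, where `σ ^ 2 = (1 - ε) / ε` optimizes the bound
  set σ := √(1 - ε) / √ε with hσ
  have hσsq : σ ^ 2 = (1 - ε) / ε := by
    rw [div_pow, sq_sqrt (by linarith), sq_sqrt hε0.le]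
  have hσ1 : 1 ≤ σ := by
    rw [le_div_iff₀ (sqrt_pos.mpr hε0), one_mul]
    exact sqrt_le_sqrt (by linarith)
  have hσ0 : 0 < σ := one_pos.trans_le hσ1
  have hσroot : σ * (2 * √(ε * (1 - ε))) = 2 * (1 - ε) := by
    rw [hσ, sqrt_mul hε0.le]
    field_simp
    rw [sq_sqrt (by linarith)]
  have hB0 : 0 ≤ ∑ w ∈ S with B w, p w := sum_nonneg fun w hw => hp0 w (mem_filter.mp hw).1
  have hfactor : 1 + (σ ^ 2 - 1) * ∑ w ∈ S with B w, p w ≤ 2 * (1 - ε) := by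
    have hgap : 0 ≤ σ ^ 2 - 1 := by nlinarith
    calc 1 + (σ ^ 2 - 1) * ∑ w ∈ S with B w, p w ≤ 1 + (σ ^ 2 - 1) * ε := by gcongr
      _ = 2 * (1 - ε) := by rw [hσsq]; field_simp; ring
  refine le_of_mul_le_mul_left ?_ (pow_pos hσ0 k)
  calc σ ^ k * ∑ u ∈ piFinset (fun _ : Fin k => S) with k ≤ 2 * #{l | B (u l)}, ∏ l, p (u l)
      ≤ ∑ u ∈ piFinset (fun _ : Fin k => S), (∏ l, p (u l)) * (σ ^ 2) ^ #{l | B (u l)} :=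
        pow_mul_sum_filter_le_sum_mul_sq_pow
          (fun u hu => prod_nonneg fun l _ => hp0 _ (mem_piFinset.mp hu l)) _ hσ1 k
    _ = (1 + (σ ^ 2 - 1) * ∑ w ∈ S with B w, p w) ^ k := by
        rw [sum_piFinset_prod_mul_pow_card_filter, sum_mul_ite_eq_one_add hp1]
    _ ≤ (2 * (1 - ε)) ^ k := pow_le_pow_left₀ (by nlinarith) hfactor k
    _ = σ ^ k * (2 * √(ε * (1 - ε))) ^ k := by rw [← mul_pow, hσroot]

theorem sum_piFinset_prod_filter_le_exp [DecidableEq α] (hp0 : ∀ w ∈ S, 0 ≤ p w)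
    (hp1 : ∑ w ∈ S, p w = 1) {ε : ℝ} (hε0 : 0 < ε) (hε : ε ≤ 1 / 2)
    (hB : ∑ w ∈ S with B w, p w ≤ ε) (k : ℕ) :
    ∑ u ∈ piFinset (fun _ : Fin k => S) with k ≤ 2 * #{l | B (u l)}, ∏ l, p (u l)
      ≤ exp (-2 * k * (1 / 2 - ε) ^ 2) :=
  calc _ ≤ (2 * √(ε * (1 - ε))) ^ k := sum_piFinset_prod_filter_le_sqrt_pow hp0 hp1 hε0 hε hB k
    _ ≤ exp (-2 * (1 / 2 - ε) ^ 2) ^ k :=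
        pow_le_pow_left₀ (by positivity) (two_mul_sqrt_mul_one_sub_le_exp ε) k
    _ = exp (-2 * k * (1 / 2 - ε) ^ 2) := by rw [← exp_nat_mul]; ring_nf

end Chernoff

lemma exists_mem_forall_not_of_sum_sum_filter_lt {ι κ : Type*} [Fintype κ] {T : Finset ι}
    {μ : ι → ℝ} (hμ : ∀ u ∈ T, 0 ≤ μ u) (hT : ∑ u ∈ T, μ u = 1) (E : κ → ι → Prop)
    [∀ j, DecidablePred (E j)] (h : ∑ j, ∑ u ∈ T with E j u, μ u < 1) :
    ∃ u ∈ T, ∀ j, ¬ E j u := by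
  by_contra! hbad
  refine h.not_ge (hT ▸ ?_)
  simp only [sum_filter]
  rw [sum_comm]
  refine sum_le_sum fun u hu => ?_
  obtain ⟨j, hj⟩ := hbad u hu
  calc μ u = if E j u then μ u else 0 := (if_pos hj).symm
    _ ≤ ∑ j, if E j u then μ u else 0 :=
        single_le_sum (f := fun j => if E j u then μ u else 0)
          (fun j _ => by split_ifs <;> simp [hμ u hu]) (mem_univ j)

lemma eq_ite_of_two_mul_card_ne_lt {k : ℕ} (s : Fin k → ℝ) {a : ℝ} (ha : a = 1 ∨ a = -1)
    (h : 2 * #{l | s l ≠ a} < k) :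
    a = if (k : ℝ) < 2 * (#{l | s l = 1} : ℝ) then 1 else -1 := by
  rcases ha with rfl | rfl
  · have hsplit : #{l | s l = 1} + #{l | s l ≠ 1} = k := by
      simpa using card_filter_add_card_filter_not (s := univ) fun l => s l = 1
    rw [if_pos (by exact_mod_cast (by omega : k < 2 * #{l | s l = 1}))]
  · have hsub : #{l | s l = 1} ≤ #{l | s l ≠ -1} :=
      card_le_card (monotone_filter_right _ fun l _ (hl : s l = 1) => by rw [hl]; norm_num)
    rw [if_neg (by exact_mod_cast (by omega : ¬ k < 2 * #{l | s l = 1}))]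

theorem stmt13_general (m n d k : ℕ) (ε : ℝ) (hε0 : 0 < ε) (hε : ε < 1 / 2)
    (hkn : (n : ℝ) * Real.exp (-2 * k * (1 / 2 - ε) ^ 2) < 1)
    (A : Matrix (Fin m) (Fin n) ℝ) (hA : ∀ i j, A i j = 1 ∨ A i j = -1)
    (v : Fin n → EuclideanSpace ℝ (Fin d))
    (S : Fin m → Finset (EuclideanSpace ℝ (Fin d)))
    (p : Fin m → EuclideanSpace ℝ (Fin d) → ℝ)
    (hp0 : ∀ i w, 0 ≤ p i w) (hp1 : ∀ i, ∑ w ∈ S i, p i w = 1)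
    (herr : ∀ i j, ∑ w ∈ (S i).filter (fun w => Rsign ⟪w, v j⟫ ≠ A i j), p i w ≤ ε) :
    ∀ i, ∃ u : Fin k → EuclideanSpace ℝ (Fin d), ∀ j,
      A i j = if (k : ℝ) < 2 * ((Finset.univ.filter
          fun l => Rsign ⟪u l, v j⟫ = 1).card : ℝ) then 1 else -1 := by
  intro i
  have hunion : ∑ j, ∑ u ∈ piFinset (fun _ : Fin k => S i) with
      k ≤ 2 * #{l | Rsign ⟪u l, v j⟫ ≠ A i j}, ∏ l, p i (u l) < 1 :=
    calc _ ≤ ∑ _j : Fin n, exp (-2 * k * (1 / 2 - ε) ^ 2) := sum_le_sum fun j _ =>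
          sum_piFinset_prod_filter_le_exp (fun w _ => hp0 i w) (hp1 i) hε0 hε.le (herr i j) k
      _ < 1 := by rwa [sum_const, card_univ, Fintype.card_fin, nsmul_eq_mul]
  obtain ⟨u, -, hu⟩ := exists_mem_forall_not_of_sum_sum_filter_lt
    (fun u _ => prod_nonneg fun l _ => hp0 i (u l))
    (by rw [← sum_pow', hp1 i, one_pow]) _ hunion
  exact ⟨u, fun j => eq_ite_of_two_mul_card_ne_lt _ (hA i j) (not_le.mp (hu j))⟩

theorem stmt13 (m n d k : ℕ) (ε : ℝ) (hε0 : 0 < ε) (hε : ε < 1 / 2)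
    (hk : Odd k) (hkn : (n : ℝ) * Real.exp (-2 * k * (1 / 2 - ε) ^ 2) < 1)
    (A : Matrix (Fin m) (Fin n) ℝ) (hA : ∀ i j, A i j = 1 ∨ A i j = -1)
    (v : Fin n → EuclideanSpace ℝ (Fin d))
    (S : Fin m → Finset (EuclideanSpace ℝ (Fin d)))
    (p : Fin m → EuclideanSpace ℝ (Fin d) → ℝ)
    (hp0 : ∀ i w, 0 ≤ p i w) (hp1 : ∀ i, ∑ w ∈ S i, p i w = 1)
    (herr : ∀ i j, ∑ w ∈ (S i).filter (fun w => Rsign ⟪w, v j⟫ ≠ A i j), p i w ≤ ε) :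
    ∀ i, ∃ u : Fin k → EuclideanSpace ℝ (Fin d), ∀ j,
      A i j = if (k : ℝ) < 2 * ((Finset.univ.filter
          fun l => Rsign ⟪u l, v j⟫ = 1).card : ℝ) then 1 else -1 :=
  stmt13_general m n d k ε hε0 hε hkn A hA v S p hp0 hp1 herr
end

section
/- Suppose there exists a probability distribution μ over integer-coefficient multilinear polynomials p of degree at most t in m variables such that for every z ∈ {0,1}^m, Pr_{p∼μ}[(−1)^{|z|} ≠ p(z)] ≤ ε. Then the ε-approximate sign-rank of the 2^m × 2^m Hadamard matrix H_m (in the dual formulation) is at most Σ_{j=0}^{t} C(m, j). -/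
open scoped RealInnerProductSpace
open scoped Classical

lemma card_le_deg (m t : ℕ) :
    Fintype.card {S : Finset (Fin m) // S.card ≤ t}
      = ∑ j ∈ Finset.range (t + 1), m.choose j := by
  rw [Fintype.card_subtype]
  have h : (Finset.univ.filter fun S : Finset (Fin m) => S.card ≤ t)
      = (Finset.range (t+1)).biUnion
          (fun j => Finset.univ.filter fun S : Finset (Fin m) => S.card = j) := by
    ext S
    simp [Nat.lt_succ_iff]
  rw [h, Finset.card_biUnion]
  · apply Finset.sum_congr rfl
    intro j _
    have h2 : (Finset.univ.filter fun S : Finset (Fin m) => S.card = j).card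
        = Fintype.card {S : Finset (Fin m) // S.card = j} :=
      (Fintype.card_subtype _).symm
    rw [h2, Fintype.card_finset_len, Fintype.card_fin]
  · intro a _ b _ hab
    simp only [Finset.disjoint_left, Finset.mem_filter]
    rintro S ⟨_, rfl⟩ ⟨_, h⟩
    exact hab h

theorem stmt16 (m t : ℕ) (ε : ℝ)
    (Q : Finset ({S : Finset (Fin m) // S.card ≤ t} → ℤ))
    (w : ({S : Finset (Fin m) // S.card ≤ t} → ℤ) → ℝ)
    (hw0 : ∀ a, 0 ≤ w a) (hw1 : ∑ a ∈ Q, w a = 1)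
    (happ : ∀ z : Fin m → ℝ, (∀ i, z i = 0 ∨ z i = 1) →
      ∑ a ∈ Q.filter (fun a =>
        ((-1 : ℝ) ^ (Finset.univ.filter fun i => z i = 1).card ≠
          ∑ S : {S : Finset (Fin m) // S.card ≤ t}, (a S : ℝ) * ∏ i ∈ S.1, z i)),
        w a ≤ ε) :
    ∃ (v : (Fin m → Bool) →
        EuclideanSpace ℝ (Fin (∑ j ∈ Finset.range (t + 1), m.choose j)))
      (E : (Fin m → Bool) →
        Finset (EuclideanSpace ℝ (Fin (∑ j ∈ Finset.range (t + 1), m.choose j))))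
      (q : (Fin m → Bool) →
        EuclideanSpace ℝ (Fin (∑ j ∈ Finset.range (t + 1), m.choose j)) → ℝ),
      (∀ x u, 0 ≤ q x u) ∧ (∀ x, ∑ u ∈ E x, q x u = 1) ∧
      ∀ x y : Fin m → Bool,
        ∑ u ∈ (E x).filter (fun u => Rsign ⟪u, v y⟫ ≠
          (-1 : ℝ) ^ (Finset.univ.filter fun i => x i = true ∧ y i = true).card),
          q x u ≤ ε := by
  set D := ∑ j ∈ Finset.range (t + 1), m.choose j with hD
  let e : {S : Finset (Fin m) // S.card ≤ t} ≃ Fin D :=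
    Fintype.equivFinOfCardEq (card_le_deg m t)
  let χ : (Fin m → Bool) → Fin m → ℝ := fun b i => if b i then 1 else 0
  let v : (Fin m → Bool) → EuclideanSpace ℝ (Fin D) :=
    fun y => WithLp.toLp 2 fun k => ∏ i ∈ (e.symm k).1, χ y i
  let U : (Fin m → Bool) → ({S : Finset (Fin m) // S.card ≤ t} → ℤ) →
      EuclideanSpace ℝ (Fin D) :=
    fun x a => WithLp.toLp 2 fun k => (a (e.symm k) : ℝ) * ∏ i ∈ (e.symm k).1, χ x i
  refine ⟨v, fun x => Q.image (U x),
    fun x u => ∑ a ∈ Q.filter (fun a => U x a = u), w a, ?_, ?_, ?_⟩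
  · intro x u
    exact Finset.sum_nonneg fun a _ => hw0 a
  · intro x
    rw [← hw1]
    exact Finset.sum_image' _ (fun a _ => rfl)
  · intro x y
    set z : Fin m → ℝ := fun i => if x i ∧ y i then 1 else 0 with hz
    have hz01 : ∀ i, z i = 0 ∨ z i = 1 := by
      intro i; by_cases h : x i ∧ y i <;> simp [hz, h]
    have hprod : ∀ S : Finset (Fin m),
        ∏ i ∈ S, z i = (∏ i ∈ S, χ x i) * ∏ i ∈ S, χ y i := by
      intro S
      rw [← Finset.prod_mul_distrib]
      apply Finset.prod_congr rfl
      intro i _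
      by_cases hx : x i <;> by_cases hy : y i <;> simp [hz, χ, hx, hy]
    have hkey : ∀ a, ⟪U x a, v y⟫ =
        ∑ S : {S : Finset (Fin m) // S.card ≤ t}, (a S : ℝ) * ∏ i ∈ S.1, z i := by
      intro a
      rw [PiLp.inner_apply]
      rw [← Equiv.sum_comp e.symm (fun S => (a S : ℝ) * ∏ i ∈ S.1, z i)]
      apply Finset.sum_congr rfl
      intro k _
      simp only [U, v, PiLp.toLp_apply, RCLike.inner_apply, conj_trivial]
      rw [hprod]
      ring
    have hcard : (Finset.univ.filter fun i => z i = 1).card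
        = (Finset.univ.filter fun i => x i = true ∧ y i = true).card := by
      congr 1
      apply Finset.filter_congr
      intro i _
      by_cases h : x i ∧ y i <;> simp [hz, h]
    set P : EuclideanSpace ℝ (Fin D) → Prop := fun u => Rsign ⟪u, v y⟫ ≠
      (-1 : ℝ) ^ (Finset.univ.filter fun i => x i = true ∧ y i = true).card with hP
    have hmain : ∑ u ∈ (Q.image (U x)).filter P,
        (∑ a ∈ Q.filter (fun a => U x a = u), w a)
        = ∑ a ∈ Q.filter (fun a => P (U x a)), w a := by
      rw [Finset.sum_filter, Finset.sum_filter]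
      apply Finset.sum_image'
      intro a ha
      have : ∀ a' ∈ Q.filter (fun c => U x c = U x a),
          (if P (U x a') then w a' else 0) = (if P (U x a) then w a' else 0) := by
        intro a' ha'
        rw [(Finset.mem_filter.1 ha').2]
      rw [Finset.sum_congr rfl this]
      split_ifs with h
      · rfl
      · exact Finset.sum_const_zero.symm
    rw [hmain]
    refine le_trans (Finset.sum_le_sum_of_subset_of_nonneg ?_ (fun a _ _ => hw0 a))
      (by rw [hcard] at *; exact happ z hz01)
    intro a ha
    rw [Finset.mem_filter] at ha ⊢
    refine ⟨ha.1, ?_⟩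
    intro hcon
    apply ha.2
    rw [hkey, ← hcon, ← hcard]
    rcases Nat.even_or_odd (Finset.univ.filter fun i => z i = 1).card with he | ho
    · rw [he.neg_one_pow]; simp [Rsign]
    · rw [ho.neg_one_pow]; norm_num [Rsign]
end
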